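/- Let a ∈ ℂⁿ, β > 0, and let z ∈ ℂⁿ with ‖z‖₂ = 1 be a local minimizer of f(z) = (1/2)|a* z|² + (β/2) Σₖ |zₖ|⁴ on the complex unit sphere, with Lagrange multiplier λ = (1/2)|a* z|² + β Σₖ |zₖ|⁴. Then for every index k with a_k = 0, we have |z_k|² = λ/β. -/

import Mathlib

/-!
Fix `k` with `a k = 0` and move squared mass `x` onto the coordinate `k` while rescaling the
others: this is a curve on the unit sphere through `z` (at `x = ‖z k‖ ^ 2`), and since `a k = 0`
the objective along it is a quadratic polynomial in `x` whose derivative at `‖z k‖ ^ 2` is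
`(β ‖z k‖ ^ 2 - λ) / (1 - ‖z k‖ ^ 2)`. Minimality from the right (`x ≥ 0` is the only
constraint there) makes it nonnegative, so `β ‖z k‖ ^ 2 ≥ λ > 0`; hence `‖z k‖ ^ 2` is interior
and the derivative vanishes. The case `‖z k‖ = 1`, where the curve degenerates, is direct.
-/

open Matrix Finset

lemma IsLocalMinOn.hasDerivAt_nonneg_of_mem_Ico {g : ℝ → ℝ} {a b p g' : ℝ}
    (h : IsLocalMinOn g (Set.Icc a b) p) (hg : HasDerivAt g g' p) (hp : p ∈ Set.Ico a b) :
    0 ≤ g' := by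
  have hcone : b - p ∈ posTangentConeAt (Set.Icc a b) p :=
    sub_mem_posTangentConeAt_of_segment_subset
      ((segment_eq_Icc hp.2.le).trans_subset (Set.Icc_subset_Icc_left hp.1))
  have := h.hasFDerivWithinAt_nonneg hg.hasFDerivAt.hasFDerivWithinAt hcone
  simp only [ContinuousLinearMap.toSpanSingleton_apply, smul_eq_mul] at this
  exact nonneg_of_mul_nonneg_right this (sub_pos.2 hp.2)

section MassTransfer

variable {ι : Type*} [DecidableEq ι] {z : ι → ℂ} {k : ι} {x : ℝ}

noncomputable def massTransfer (z : ι → ℂ) (k : ι) (x : ℝ) : ι → ℂ :=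
  Function.update (fun j => (√((1 - x) / (1 - ‖z k‖ ^ 2)) : ℂ) * z j) k
    (√x * Complex.exp (Complex.arg (z k) * Complex.I))

lemma norm_massTransfer_self : ‖massTransfer z k x k‖ = √x := by
  simp [massTransfer, Complex.norm_exp_ofReal_mul_I]

lemma norm_massTransfer_of_ne {j : ι} (hj : j ≠ k) :
    ‖massTransfer z k x j‖ = √((1 - x) / (1 - ‖z k‖ ^ 2)) * ‖z j‖ := by
  simp [massTransfer, hj]

lemma massTransfer_norm_sq (hk : ‖z k‖ ^ 2 ≠ 1) : massTransfer z k (‖z k‖ ^ 2) = z := by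
  ext j
  by_cases hj : j = k
  · subst hj
    simp [massTransfer, Complex.norm_mul_exp_arg_mul_I]
  · simp [massTransfer, hj, div_self (sub_ne_zero.2 hk.symm)]

lemma continuous_massTransfer : Continuous (massTransfer z k) := by
  refine continuous_pi fun j => ?_
  by_cases hj : j = k
  · subst hj
    simp only [massTransfer, Function.update_self]
    fun_prop
  · simp only [massTransfer, Function.update_of_ne hj]
    fun_prop

variable [Fintype ι]

lemma sum_norm_pow_massTransfer (n : ℕ) :
    ∑ j, ‖massTransfer z k x j‖ ^ n =
      √x ^ n + √((1 - x) / (1 - ‖z k‖ ^ 2)) ^ n * (∑ j, ‖z j‖ ^ n - ‖z k‖ ^ n) := by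
  rw [← add_sum_erase _ _ (mem_univ k), ← add_sum_erase _ (fun j => ‖z j‖ ^ n) (mem_univ k),
    norm_massTransfer_self, add_sub_cancel_left, mul_sum]
  congr 1
  refine sum_congr rfl fun j hj => ?_
  rw [norm_massTransfer_of_ne (ne_of_mem_erase hj), mul_pow]

lemma dotProduct_massTransfer {v : ι → ℂ} (hv : v k = 0) :
    v ⬝ᵥ massTransfer z k x = √((1 - x) / (1 - ‖z k‖ ^ 2)) * (v ⬝ᵥ z) := by
  simp only [dotProduct, mul_sum]
  refine sum_congr rfl fun j _ => ?_
  by_cases hj : j = k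
  · simp [hj, hv]
  · simp only [massTransfer, Function.update_of_ne hj]
    ring

lemma sum_norm_sq_massTransfer (hz : ∑ j, ‖z j‖ ^ 2 = 1) (hk : ‖z k‖ ^ 2 < 1)
    (hx : x ∈ Set.Icc 0 1) : ∑ j, ‖massTransfer z k x j‖ ^ 2 = 1 := by
  have hm : 1 - ‖z k‖ ^ 2 ≠ 0 := by linarith
  have hc : 0 ≤ (1 - x) / (1 - ‖z k‖ ^ 2) := div_nonneg (by linarith [hx.2]) (by linarith)
  rw [sum_norm_pow_massTransfer, hz, Real.sq_sqrt hx.1, Real.sq_sqrt hc]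
  field_simp
  ring

lemma sum_norm_pow_four_massTransfer (hk : ‖z k‖ ^ 2 < 1) (hx : x ∈ Set.Icc 0 1) :
    ∑ j, ‖massTransfer z k x j‖ ^ 4 =
      x ^ 2 + ((1 - x) / (1 - ‖z k‖ ^ 2)) ^ 2 * (∑ j, ‖z j‖ ^ 4 - ‖z k‖ ^ 4) := by
  have hc : 0 ≤ (1 - x) / (1 - ‖z k‖ ^ 2) := div_nonneg (by linarith [hx.2]) (by linarith)
  have hsqrt : ∀ y : ℝ, 0 ≤ y → √y ^ 4 = y ^ 2 := fun y hy => by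
    rw [show 4 = 2 * 2 from rfl, pow_mul, Real.sq_sqrt hy]
  rw [sum_norm_pow_massTransfer, hsqrt x hx.1, hsqrt _ hc]

end MassTransfer

noncomputable def quarticObjective {ι : Type*} [Fintype ι] (a : ι → ℂ) (β : ℝ) (w : ι → ℂ) : ℝ :=
  1 / 2 * ‖star a ⬝ᵥ w‖ ^ 2 + β / 2 * ∑ j, ‖w j‖ ^ 4

noncomputable def reducedObjective (A Q p β x : ℝ) : ℝ :=
  1 / 2 * A * ((1 - x) / (1 - p)) + β / 2 * (x ^ 2 + ((1 - x) / (1 - p)) ^ 2 * (Q - p ^ 2))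

lemma hasDerivAt_reducedObjective (A Q β : ℝ) {p : ℝ} (hp : p ≠ 1) :
    HasDerivAt (reducedObjective A Q p β) ((β * p - (1 / 2 * A + β * Q)) / (1 - p)) p := by
  have hm : 1 - p ≠ 0 := sub_ne_zero.2 hp.symm
  have hc : HasDerivAt (fun x : ℝ => (1 - x) / (1 - p)) (-1 / (1 - p)) p := by
    simpa using ((hasDerivAt_id p).const_sub 1).div_const (1 - p)
  refine ((hc.const_mul (1 / 2 * A)).add (((hasDerivAt_pow 2 p).add
    ((hc.pow 2).mul_const (Q - p ^ 2))).const_mul (β / 2))).congr_deriv ?_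
  field_simp
  ring

section SphereRestriction

variable {ι : Type*} [Fintype ι] [DecidableEq ι] {a z : ι → ℂ} {k : ι} {β : ℝ}

lemma quarticObjective_massTransfer (hak : a k = 0) (hk : ‖z k‖ ^ 2 < 1) {x : ℝ}
    (hx : x ∈ Set.Icc 0 1) :
    quarticObjective a β (massTransfer z k x) =
      reducedObjective (‖star a ⬝ᵥ z‖ ^ 2) (∑ j, ‖z j‖ ^ 4) (‖z k‖ ^ 2) β x := by
  have hc : 0 ≤ (1 - x) / (1 - ‖z k‖ ^ 2) := div_nonneg (by linarith [hx.2]) (by linarith)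
  rw [quarticObjective, reducedObjective, sum_norm_pow_four_massTransfer hk hx,
    dotProduct_massTransfer (by simp [hak]), norm_mul, Complex.norm_real, Real.norm_eq_abs,
    abs_of_nonneg (Real.sqrt_nonneg _), mul_pow, Real.sq_sqrt hc]
  ring

lemma isLocalMinOn_reducedObjective (hak : a k = 0) (hz : ∑ j, ‖z j‖ ^ 2 = 1)
    (hk : ‖z k‖ ^ 2 < 1) (hmin : IsLocalMinOn (quarticObjective a β) {w | ∑ j, ‖w j‖ ^ 2 = 1} z) :
    IsLocalMinOn (reducedObjective (‖star a ⬝ᵥ z‖ ^ 2) (∑ j, ‖z j‖ ^ 4) (‖z k‖ ^ 2) β)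
      (Set.Icc 0 1) (‖z k‖ ^ 2) := by
  have hp : ‖z k‖ ^ 2 ∈ Set.Icc (0 : ℝ) 1 := ⟨sq_nonneg _, hk.le⟩
  rw [← massTransfer_norm_sq hk.ne] at hmin
  refine (hmin.comp_continuousOn (fun x hx => sum_norm_sq_massTransfer hz hk hx)
    continuous_massTransfer.continuousOn hp).congr ?_ hp
  exact eventually_nhdsWithin_of_forall fun x hx => quarticObjective_massTransfer hak hk hx

end SphereRestriction

lemma eq_single_of_norm_sq_eq_one {ι : Type*} [Fintype ι] [DecidableEq ι] {z : ι → ℂ} {k : ι}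
    (hz : ∑ j, ‖z j‖ ^ 2 = 1) (hk : ‖z k‖ ^ 2 = 1) : z = Pi.single k (z k) := by
  have hrest : ∑ j ∈ univ.erase k, ‖z j‖ ^ 2 = 0 := by
    linarith [add_sum_erase _ (fun j => ‖z j‖ ^ 2) (mem_univ k)]
  ext j
  by_cases hj : j = k
  · subst hj; simp
  · have := (sum_eq_zero_iff_of_nonneg fun i _ => sq_nonneg ‖z i‖).1 hrest j
      (mem_erase.2 ⟨hj, mem_univ j⟩)
    simpa [hj] using this

lemma sum_norm_pow_four_pos {ι : Type*} [Fintype ι] {z : ι → ℂ} (hz : ∑ j, ‖z j‖ ^ 2 = 1) :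
    0 < ∑ j, ‖z j‖ ^ 4 := by
  obtain ⟨j, -, hj⟩ := exists_ne_zero_of_sum_ne_zero (hz.trans_ne one_ne_zero)
  have hzj : z j ≠ 0 := by simpa using hj
  exact lt_of_lt_of_le (by positivity) (single_le_sum (fun i _ => by positivity) (mem_univ j))

theorem stmt6 {n : ℕ} (a : Fin n → ℂ) (β : ℝ) (hβ : 0 < β)
    (z : Fin n → ℂ) (hz : ∑ k, ‖z k‖ ^ 2 = 1)
    (hmin : IsLocalMinOn
      (fun w : Fin n → ℂ => (1 / 2) * ‖star a ⬝ᵥ w‖ ^ 2 + (β / 2) * ∑ k, ‖w k‖ ^ 4)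
      {w | ∑ k, ‖w k‖ ^ 2 = 1} z)
    (lam : ℝ)
    (hlam : lam = (1 / 2) * ‖star a ⬝ᵥ z‖ ^ 2 + β * ∑ k, ‖z k‖ ^ 4) :
    ∀ k, a k = 0 → ‖z k‖ ^ 2 = lam / β := by
  intro k hak
  have hlam_pos : 0 < lam := by
    rw [hlam]; have := sum_norm_pow_four_pos hz; positivity
  rw [eq_div_iff hβ.ne']
  rcases (single_le_sum (fun j _ => sq_nonneg ‖z j‖) (mem_univ k)).trans_eq hz |>.eq_or_lt
    with hk | hk
  · have hk4 : ‖z k‖ ^ 4 = 1 := by rw [show 4 = 2 * 2 from rfl, pow_mul, hk, one_pow]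
    rw [hlam, eq_single_of_norm_sq_eq_one hz hk]
    simp [hak, hk, hk4, Pi.single_apply, apply_ite (fun c : ℂ => ‖c‖ ^ 4)]
  have hm : 0 < 1 - ‖z k‖ ^ 2 := sub_pos.2 hk
  have hloc := isLocalMinOn_reducedObjective hak hz hk hmin
  have hderiv :=
    hlam ▸ hasDerivAt_reducedObjective (‖star a ⬝ᵥ z‖ ^ 2) (∑ j, ‖z j‖ ^ 4) β hk.ne
  have hge := hloc.hasDerivAt_nonneg_of_mem_Ico hderiv ⟨sq_nonneg _, hk⟩
  rw [le_div_iff₀ hm, zero_mul, sub_nonneg] at hge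
  have hpos : 0 < ‖z k‖ ^ 2 := pos_of_mul_pos_right (hlam_pos.trans_le hge) hβ.le
  have heq := (hloc.isLocalMin (Icc_mem_nhds hpos hk)).hasDerivAt_eq_zero hderiv
  rw [mul_comm, ← sub_eq_zero]
  exact (div_eq_zero_iff.1 heq).resolve_right hm.ne'
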